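/- Let R be a commutative ring, let x_1,…,x_n, c ∈ R, and let λ = (λ_1 > ⋯ > λ_n ≥ 1) be a strict partition of length n. In R[[z_1,…,z_n]], the coefficient of z_1^{λ_1}⋯z_n^{λ_n} in Π_{k=1}^n (1 + c·z_k) · Σ_{σ ∈ S_n} sgn(σ) Π_{j=1}^n (1 − x_{σ(j)}·z_j)^{−1} equals Π_{k=1}^n (x_k + c) · det_{1≤i,j≤n}( x_i^{λ_j − 1} ). (With c = t_n x_n and after dividing by the Vandermonde Π_{i<j}(x_i − x_j), this is the key identity ('lasttoshow') used in the proof of Theorem 2, expressing the coefficient extraction as Π_k (x_k + t_n x_n) · s_{λ−ρ}(x).) -/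

import Mathlib

/-!
Multiplying the factors `1 + c z_k` into the alternating sum, the term of `σ` becomes a product of
series `(1 + c z_j)(1 - x_{σ j} z_j)⁻¹` each involving only the variable `z_j`. The coefficient of
`z_1^{λ_1} ⋯ z_n^{λ_n}` in such a product is the product of the coefficients of `z_j^{λ_j}` in the
factors, and since `λ_j ≥ 1` that coefficient is `(x_{σ j} + c) x_{σ j}^{λ_j - 1}`. Pulling out
`∏_k (x_k + c)` leaves the Leibniz expansion of `det (x_i^{λ_j - 1})`.
-/

/-- The geometric series `∑_{m ≥ 0} a^m z_j^m = (1 - a z_j)⁻¹` in `R[[z_1, …, z_n]]`. -/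
noncomputable def geom {R : Type*} [CommRing R] {n : ℕ} (a : R) (j : Fin n) :
    MvPowerSeries (Fin n) R :=
  fun d => if d = Finsupp.single j (d j) then a ^ (d j) else 0

open Finsupp Finset

namespace MvPowerSeries

variable {σ R : Type*} [CommSemiring R]

def SupportedOnAxis (j : σ) (F : MvPowerSeries σ R) : Prop :=
  ∀ d : σ →₀ ℕ, d ≠ single j (d j) → coeff d F = 0

theorem supportedOnAxis_X (j : σ) : SupportedOnAxis j (X j : MvPowerSeries σ R) := by
  classical
  intro d hd
  rw [coeff_X, if_neg]
  rintro rfl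
  simp at hd

theorem supportedOnAxis_C (j : σ) (c : R) : SupportedOnAxis j (C c : MvPowerSeries σ R) := by
  classical
  intro d hd
  rw [coeff_C, if_neg]
  rintro rfl
  simp at hd

theorem supportedOnAxis_one (j : σ) : SupportedOnAxis j (1 : MvPowerSeries σ R) := by
  simpa using supportedOnAxis_C j (1 : R)

theorem SupportedOnAxis.add {j : σ} {F G : MvPowerSeries σ R} (hF : SupportedOnAxis j F)
    (hG : SupportedOnAxis j G) : SupportedOnAxis j (F + G) := fun d hd => by
  rw [map_add, hF d hd, hG d hd, add_zero]

theorem SupportedOnAxis.mul {j : σ} {F G : MvPowerSeries σ R} (hF : SupportedOnAxis j F)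
    (hG : SupportedOnAxis j G) : SupportedOnAxis j (F * G) := by
  classical
  intro d hd
  rw [coeff_mul]
  refine sum_eq_zero fun p hp => ?_
  rw [HasAntidiagonal.mem_antidiagonal] at hp
  by_cases hp₁ : p.1 = single j (p.1 j)
  · by_cases hp₂ : p.2 = single j (p.2 j)
    · refine absurd ?_ hd
      rw [← hp, hp₁, hp₂]
      simp
    · rw [hG _ hp₂, mul_zero]
  · rw [hF _ hp₁, zero_mul]

theorem supportedOnAxis_geom {R : Type*} [CommRing R] {n : ℕ} (a : R) (j : Fin n) :
    SupportedOnAxis j (geom a j) := fun _ hd => if_neg hd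

theorem coeff_prod_of_supportedOnAxis [Fintype σ] [DecidableEq σ] {F : σ → MvPowerSeries σ R}
    (hF : ∀ j, SupportedOnAxis j (F j)) (v : σ →₀ ℕ) :
    coeff v (∏ j, F j) = ∏ j, coeff (single j (v j)) (F j) := by
  let l₀ : σ →₀ σ →₀ ℕ := equivFunOnFinite.symm fun j => single j (v j)
  rw [coeff_prod, sum_eq_single l₀ _ (fun h => (h (by simp [l₀, Finsupp.univ_sum_single])).elim)]
  · rfl
  intro l hl hne
  simp only [mem_finsuppAntidiag, subset_univ, and_true] at hl
  obtain ⟨j, hj⟩ : ∃ j, l j ≠ single j (l j j) := by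
    by_contra! hall
    refine hne (Finsupp.ext fun j => ?_)
    have hdiag : l j j = v j := by
      rw [← hl, Finsupp.finsetSum_apply, Finset.sum_eq_single j (fun i _ hij => by
        rw [hall i, single_eq_of_ne hij.symm]) (by simp)]
    rw [hall j, hdiag]
    rfl
  exact prod_eq_zero (mem_univ j) (hF j _ hj)

end MvPowerSeries

section Geom

open MvPowerSeries

variable {R : Type*} [CommRing R] {n : ℕ}

theorem coeff_single_geom (a : R) (j : Fin n) (m : ℕ) :
    coeff (single j m) (geom a j) = a ^ m := by
  simp [geom, coeff_apply]

theorem supportedOnAxis_one_add_C_mul_X_mul_geom (a c : R) (j : Fin n) :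
    SupportedOnAxis j ((1 + C c * X j) * geom a j) :=
  ((supportedOnAxis_one j).add ((supportedOnAxis_C j c).mul (supportedOnAxis_X j))).mul
    (supportedOnAxis_geom a j)

theorem coeff_one_add_C_mul_X_mul_geom (a c : R) (j : Fin n) (m : ℕ) :
    coeff (single j (m + 1)) ((1 + C c * X j) * geom a j) = (a + c) * a ^ m := by
  have hX : coeff (single j (m + 1)) (X j * geom a j) = a ^ m := by
    rw [add_comm m 1, single_add, X, coeff_add_monomial_mul, one_mul, coeff_single_geom]
  rw [add_mul, one_mul, mul_assoc, map_add, coeff_C_mul, hX, coeff_single_geom]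
  ring

theorem coeff_prod_one_add_C_mul_X_mul_prod_geom (x : Fin n → R) (c : R) (lam : Fin n → ℕ)
    (hlam : ∀ j, 1 ≤ lam j) :
    coeff (equivFunOnFinite.symm lam) ((∏ k, (1 + C c * X k)) * ∏ j, geom (x j) j) =
      ∏ j, (x j + c) * x j ^ (lam j - 1) := by
  rw [← prod_mul_distrib,
    coeff_prod_of_supportedOnAxis fun j => supportedOnAxis_one_add_C_mul_X_mul_geom _ c j]
  refine prod_congr rfl fun j _ => ?_
  rw [coe_equivFunOnFinite_symm, ← Nat.sub_add_cancel (hlam j),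
    coeff_one_add_C_mul_X_mul_geom, Nat.add_sub_cancel]

end Geom

theorem stmt9_general {R : Type*} [CommRing R] (n : ℕ) (x : Fin n → R) (c : R)
    (lam : Fin n → ℕ) (hlam1 : ∀ i, 1 ≤ lam i) :
    MvPowerSeries.coeff (R := R) (Finsupp.equivFunOnFinite.symm lam)
      ((∏ k : Fin n, (1 + MvPowerSeries.C (σ := Fin n) (R := R) c * MvPowerSeries.X k)) *
        ∑ σ : Equiv.Perm (Fin n), (Equiv.Perm.sign σ : ℤ) • ∏ j : Fin n, geom (x (σ j)) j)
    = (∏ k : Fin n, (x k + c)) *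
      Matrix.det (Matrix.of fun i j : Fin n => x i ^ (lam j - 1)) := by
  rw [Finset.mul_sum, map_sum, Matrix.det_apply, Finset.mul_sum]
  refine sum_congr rfl fun σ _ => ?_
  rw [mul_smul_comm, map_zsmul,
    coeff_prod_one_add_C_mul_X_mul_prod_geom (fun j => x (σ j)) c lam hlam1, prod_mul_distrib,
    Equiv.prod_comp σ fun k => x k + c, Units.smul_def, zsmul_eq_mul, zsmul_eq_mul]
  simp only [Matrix.of_apply]
  ring

/-- the key coefficient identity (`lasttoshow`, multiplied through by the
Vandermonde) used in the proof of Theorem 2. -/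
theorem stmt9 {R : Type*} [CommRing R] (n : ℕ) (x : Fin n → R) (c : R)
    (lam : Fin n → ℕ) (hlam : StrictAnti lam) (hlam1 : ∀ i, 1 ≤ lam i) :
    MvPowerSeries.coeff (R := R) (Finsupp.equivFunOnFinite.symm lam)
      ((∏ k : Fin n, (1 + MvPowerSeries.C (σ := Fin n) (R := R) c * MvPowerSeries.X k)) *
        ∑ σ : Equiv.Perm (Fin n), (Equiv.Perm.sign σ : ℤ) • ∏ j : Fin n, geom (x (σ j)) j)
    = (∏ k : Fin n, (x k + c)) *
      Matrix.det (Matrix.of fun i j : Fin n => x i ^ (lam j - 1)) :=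
  stmt9_general n x c lam hlam1
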